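/- For n ≥ 1 and n+1 ≤ i ≤ 2n, the commutative algebra k[[a,b]]/(ab, a²+b^{2n+1}+b^{2i}) is isomorphic to k[[a,b]]/(ab, a²+b^{2n+1}). -/

import Mathlib

noncomputable section

variable {k : Type*} [Field k] [CharZero k]

abbrev PS (k : Type*) [Field k] := MvPowerSeries (Fin 2) k

def pa : PS k := MvPowerSeries.X 0
def pb : PS k := MvPowerSeries.X 1

/-!
Since `2i ≥ 2n + 2`, the two ideals are in fact equal. Modulo `ab`, multiplying `a² + c` by `b`
leaves `bc`; for `c = b^{2n+1}` this puts `b^{2n+2}` in the second ideal, and for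
`c = b^{2n+1} + b^{2i}` it puts `b^{2n+2} (1 + b^{2i-2n-1})` in the first, where the second factor
is a unit of the power series ring. So both ideals contain `b^{2i}`, and adding it to a generator
does not change either of them.
-/

theorem MvPowerSeries.isUnit_one_add_X_pow {σ R : Type*} [CommRing R] (s : σ) {d : ℕ}
    (hd : d ≠ 0) : IsUnit (1 + X s ^ d : MvPowerSeries σ R) := by
  rw [isUnit_iff_constantCoeff, map_add, map_one, map_pow, constantCoeff_X, zero_pow hd, add_zero]
  exact isUnit_one

namespace Ideal

variable {R : Type*} [CommRing R]

theorem span_pair_add_eq_of_mem {x y z : R} (hz : z ∈ span {x, y})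
    (hz' : z ∈ span {x, y + z}) : span {x, y + z} = span {x, y} := by
  have hx : x ∈ span {x, y} := subset_span (by simp)
  have hy : y ∈ span {x, y} := subset_span (by simp)
  have hx' : x ∈ span {x, y + z} := subset_span (by simp)
  have hyz : y + z ∈ span {x, y + z} := subset_span (by simp)
  apply le_antisymm <;> rw [span_le] <;> rintro w (rfl | rfl)
  exacts [hx, add_mem hy hz, hx', by simpa using sub_mem hyz hz']

theorem mul_mem_of_mul_mem_of_sq_add_mem {I : Ideal R} {a b c : R} (hab : a * b ∈ I)
    (hc : a ^ 2 + c ∈ I) : b * c ∈ I := by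
  have h : b * c = b * (a ^ 2 + c) - a * (a * b) := by ring
  rw [h]
  exact sub_mem (I.mul_mem_left _ hc) (I.mul_mem_left _ hab)

variable (a b : R)

theorem pow_succ_mem_span_mul_sq_add_pow (m : ℕ) : b ^ (m + 1) ∈ span {a * b, a ^ 2 + b ^ m} := by
  have hab : a * b ∈ span {a * b, a ^ 2 + b ^ m} := subset_span (by simp)
  have hc : a ^ 2 + b ^ m ∈ span {a * b, a ^ 2 + b ^ m} := subset_span (by simp)
  simpa only [pow_succ'] using mul_mem_of_mul_mem_of_sq_add_mem hab hc

theorem pow_succ_mem_span_mul_sq_add_pow_add_pow {m j : ℕ} (hmj : m < j)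
    (hu : IsUnit (1 + b ^ (j - m))) : b ^ (m + 1) ∈ span {a * b, a ^ 2 + b ^ m + b ^ j} := by
  set I := span {a * b, a ^ 2 + b ^ m + b ^ j}
  have hab : a * b ∈ I := subset_span (by simp)
  have hc : a ^ 2 + (b ^ m + b ^ j) ∈ I := by rw [← add_assoc]; exact subset_span (by simp)
  have hmem := mul_mem_of_mul_mem_of_sq_add_mem hab hc
  have h : b * (b ^ m + b ^ j) = b ^ (m + 1) * (1 + b ^ (j - m)) := by
    have hj : b ^ (j + 1) = b ^ (m + 1) * b ^ (j - m) := by rw [← pow_add]; congr 1; omega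
    rw [mul_add, ← pow_succ', ← pow_succ', hj]
    ring
  obtain ⟨u, hu⟩ := hu
  rw [h, ← hu] at hmem
  simpa using I.mul_mem_right (↑u⁻¹ : R) hmem

theorem span_mul_sq_add_pow_add_pow {m j : ℕ} (hmj : m < j) (hu : IsUnit (1 + b ^ (j - m))) :
    span {a * b, a ^ 2 + b ^ m + b ^ j} = span {a * b, a ^ 2 + b ^ m} := by
  obtain ⟨d, rfl⟩ := Nat.exists_eq_add_of_lt hmj
  have hdvd : b ^ (m + 1) ∣ b ^ (m + d + 1) := pow_dvd_pow b (by omega)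
  exact span_pair_add_eq_of_mem
    (mem_of_dvd _ hdvd (pow_succ_mem_span_mul_sq_add_pow a b m))
    (mem_of_dvd _ hdvd (pow_succ_mem_span_mul_sq_add_pow_add_pow a b hmj hu))

end Ideal

theorem abelianization_iso_general (n i : ℕ) (hi : n + 1 ≤ i) :
    Nonempty
      ((PS k ⧸ Ideal.span {(pa : PS k) * pb,
          (pa : PS k)^2 + pb ^ (2*n+1) + pb ^ (2*i)}) ≃ₐ[k]
        (PS k ⧸ Ideal.span {(pa : PS k) * pb, (pa : PS k)^2 + pb ^ (2*n+1)})) :=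
  ⟨Ideal.quotientEquivAlgOfEq k <| Ideal.span_mul_sq_add_pow_add_pow _ _ (by omega) <|
    MvPowerSeries.isUnit_one_add_X_pow _ (by omega)⟩

/-- For n+1 ≤ i ≤ 2n, k[[a,b]]/(ab, a²+b^{2n+1}+b^{2i}) ≅ k[[a,b]]/(ab, a²+b^{2n+1}). -/
theorem abelianization_iso (n i : ℕ) (hn : 1 ≤ n) (hi : n + 1 ≤ i) (hi2 : i ≤ 2*n) :
    Nonempty
      ((PS k ⧸ Ideal.span {(pa : PS k) * pb,
          (pa : PS k)^2 + pb ^ (2*n+1) + pb ^ (2*i)}) ≃ₐ[k]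
        (PS k ⧸ Ideal.span {(pa : PS k) * pb, (pa : PS k)^2 + pb ^ (2*n+1)})) :=
  abelianization_iso_general n i hi

end
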